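/- arXiv:2407.19982 — 5 statements merged into one kernel-verified Lean document; each statement's English description precedes it below -/
import Mathlib

section
/- Let ω be a weight on ℕ². (a) If χ is an ω-bounded semicharacter on ℕ² and we set sᵢ = χ(pᵢ,1) and tᵢ = χ(1,pᵢ) for all i ∈ ℕ, then for all k ∈ ℕ, all distinct primes p_{i₁},...,p_{i_k} and all α₁,...,α_k, β₁,...,β_k ∈ ℕ₀ one has |s_{i₁}|^{α₁}⋯|s_{i_k}|^{α_k} |t_{i₁}|^{β₁}⋯|t_{i_k}|^{β_k} ≤ ω(p_{i₁}^{α₁}⋯p_{i_k}^{α_k}, p_{i₁}^{β₁}⋯p_{i_k}^{β_k}). (b) Conversely, if ((sᵢ),(tᵢ)) is a pair of complex sequences satisfying these inequalities, then there exists an ω-bounded semicharacter χ on ℕ² with χ(pᵢ,1) = sᵢ and χ(1,pᵢ) = tᵢ for all i ∈ ℕ. -/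
open Complex Filter Topology

noncomputable section

/-- The `i`-th prime (`0`-indexed: `nthPrime 0 = 2`), as a positive natural number. -/
def nthPrime (i : ℕ) : ℕ+ := ⟨Nat.nth Nat.Prime i, (Nat.prime_nth_prime i).pos⟩

/-- A weight on `ℕ² = ℕ+ × ℕ+`: takes values in `[1,∞)` and is submultiplicative. -/
def IsWeight (ω : ℕ+ × ℕ+ → ℝ) : Prop :=
  (∀ mn : ℕ+ × ℕ+, 1 ≤ ω mn) ∧
    ∀ m₁ n₁ m₂ n₂ : ℕ+, ω (m₁ * m₂, n₁ * n₂) ≤ ω (m₁, n₁) * ω (m₂, n₂)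

/-- A weight is admissible if `ω(lⁿ,kⁿ)^{1/n} → 1` for all `(l,k)`. -/
def Admissible (ω : ℕ+ × ℕ+ → ℝ) : Prop :=
  ∀ l k : ℕ+, Tendsto (fun n : ℕ => ω (l ^ n, k ^ n) ^ ((1 : ℝ) / n)) atTop (nhds 1)

/-- A weight is almost monotone if it is admissible, or there is `K > 0` with
`ω(m₁,n₁) ≤ K ω(m₂,n₂)` whenever `m₁ ∣ m₂` or `n₁ ∣ n₂`. -/
def AlmostMonotone (ω : ℕ+ × ℕ+ → ℝ) : Prop :=
  Admissible ω ∨ ∃ K : ℝ, 0 < K ∧ ∀ m₁ n₁ m₂ n₂ : ℕ+,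
    ((m₁ : ℕ) ∣ (m₂ : ℕ) ∨ (n₁ : ℕ) ∣ (n₂ : ℕ)) → ω (m₁, n₁) ≤ K * ω (m₂, n₂)

/-- A semicharacter on `ℕ² = ℕ+ × ℕ+`: a nonzero multiplicative map into `ℂ`. -/
def IsSemicharacter (χ : ℕ+ × ℕ+ → ℂ) : Prop :=
  χ ≠ 0 ∧ ∀ m₁ n₁ m₂ n₂ : ℕ+, χ (m₁ * m₂, n₁ * n₂) = χ (m₁, n₁) * χ (m₂, n₂)

/-- A map `χ` is `ω`-bounded if `|χ(m,n)| ≤ ω(m,n)` for all `(m,n)`. -/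
def OmegaBounded (ω : ℕ+ × ℕ+ → ℝ) (χ : ℕ+ × ℕ+ → ℂ) : Prop :=
  ∀ mn : ℕ+ × ℕ+, ‖χ mn‖ ≤ ω mn

/-- `ρᵢ = lim_n ω(pᵢⁿ,1)^{1/n} = inf_n ω(pᵢⁿ,1)^{1/n}`. -/
def rho (ω : ℕ+ × ℕ+ → ℝ) (i : ℕ) : ℝ :=
  ⨅ n : ℕ+, ω (nthPrime i ^ (n : ℕ), 1) ^ ((1 : ℝ) / ((n : ℕ) : ℝ))

/-- `μᵢ = lim_n ω(1,pᵢⁿ)^{1/n} = inf_n ω(1,pᵢⁿ)^{1/n}`. -/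
def mu (ω : ℕ+ × ℕ+ → ℝ) (i : ℕ) : ℝ :=
  ⨅ n : ℕ+, ω (1, nthPrime i ^ (n : ℕ)) ^ ((1 : ℝ) / ((n : ℕ) : ℝ))

/-- index of a prime in the enumeration of primes -/
def pidx (p : ℕ) : ℕ := Nat.count Nat.Prime p

lemma nthPrime_pidx {p : ℕ} (hp : p.Prime) : ((nthPrime (pidx p) : ℕ+) : ℕ) = p :=
  Nat.nth_count hp

lemma pidx_nthPrime (i : ℕ) : pidx ((nthPrime i : ℕ+) : ℕ) = i :=
  Nat.count_nth_of_infinite Nat.infinite_setOf_prime i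

/-- multiplicative extension of a sequence via prime factorization -/
def Fχ (s : ℕ → ℂ) (m : ℕ+) : ℂ :=
  (m : ℕ).factorization.prod fun p a => s (pidx p) ^ a

lemma Fχ_mul (s : ℕ → ℂ) (m₁ m₂ : ℕ+) : Fχ s (m₁ * m₂) = Fχ s m₁ * Fχ s m₂ := by
  unfold Fχ
  rw [PNat.mul_coe, Nat.factorization_mul m₁.ne_zero m₂.ne_zero,
    Finsupp.prod_add_index' (fun p => pow_zero _) (fun p a b => pow_add _ a b)]

lemma Fχ_one (s : ℕ → ℂ) : Fχ s 1 = 1 := by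
  unfold Fχ; simp

lemma Fχ_prime (s : ℕ → ℂ) (i : ℕ) : Fχ s (nthPrime i) = s i := by
  unfold Fχ
  have h : ((nthPrime i : ℕ+) : ℕ) = Nat.nth Nat.Prime i := rfl
  rw [h, (Nat.prime_nth_prime i).factorization, Finsupp.prod_single_index, pow_one]
  · exact congrArg s (pidx_nthPrime i)
  · exact pow_zero _

lemma abs_Fχ (s : ℕ → ℂ) (m : ℕ+) :
    ‖Fχ s m‖ =
      ∏ p ∈ (m : ℕ).primeFactors, ‖s (pidx p)‖ ^ (m : ℕ).factorization p := by
  unfold Fχ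
  rw [Finsupp.prod, norm_prod]
  simp [Nat.support_factorization, map_pow]

/-- Key reduction: products over an index set covering the prime factors. -/
lemma key_bound (ω : ℕ+ × ℕ+ → ℝ) (s t : ℕ → ℂ)
    (hst : ∀ (k : ℕ) (ι : Fin k → ℕ), Function.Injective ι → ∀ α β : Fin k → ℕ,
        (∏ j : Fin k, ‖s (ι j)‖ ^ α j) *
            (∏ j : Fin k, ‖t (ι j)‖ ^ β j) ≤
          ω (∏ j : Fin k, nthPrime (ι j) ^ α j, ∏ j : Fin k, nthPrime (ι j) ^ β j))
    (m n : ℕ+) :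
    ‖Fχ s m‖ * ‖Fχ t n‖ ≤ ω (m, n) := by
  classical
  set S : Finset ℕ := (m : ℕ).primeFactors ∪ (n : ℕ).primeFactors with hS
  have hSprime : ∀ p ∈ S, p.Prime := by
    intro p hp
    rcases Finset.mem_union.mp hp with h | h
    · exact Nat.prime_of_mem_primeFactors h
    · exact Nat.prime_of_mem_primeFactors h
  set k := S.card
  set e : Fin k ≃ {x // x ∈ S} := S.equivFin.symm with he
  set ι : Fin k → ℕ := fun j => pidx ((e j : ℕ)) with hι
  have hprime : ∀ j, ((e j : ℕ)).Prime := fun j => hSprime _ (e j).2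
  have hnth : ∀ j, ((nthPrime (ι j) : ℕ+) : ℕ) = (e j : ℕ) := fun j =>
    nthPrime_pidx (hprime j)
  have hinj : Function.Injective ι := by
    intro j₁ j₂ h
    have : ((e j₁ : ℕ)) = ((e j₂ : ℕ)) := by
      rw [← hnth j₁, ← hnth j₂]; exact congrArg (fun i => ((nthPrime i : ℕ+) : ℕ)) h
    exact e.injective (Subtype.ext this)
  -- key product identity
  have hprod : ∀ (f : ℕ → ℕ) (M : ℕ+), (∀ p, f p ≠ 0 → p ∈ (M : ℕ).factorization.support) →
      (∀ p ∈ (M:ℕ).primeFactors, f p = (M:ℕ).factorization p) →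
      (∏ j : Fin k, ((nthPrime (ι j) : ℕ+) : ℕ) ^ f (e j : ℕ)) =
        ∏ p ∈ S, p ^ f p := by
    intro f M _ _
    have : (∏ j : Fin k, ((nthPrime (ι j) : ℕ+) : ℕ) ^ f (e j : ℕ))
        = ∏ j : Fin k, ((e j : ℕ)) ^ f (e j : ℕ) := by
      refine Finset.prod_congr rfl fun j _ => by rw [hnth j]
    rw [this]
    exact (Equiv.prod_comp e (fun x : {x // x ∈ S} => ((x : ℕ)) ^ f (x : ℕ))).trans
      (Finset.prod_coe_sort S (fun p => p ^ f p))
  have hfact : ∀ (M : ℕ+), ((M : ℕ)).primeFactors ⊆ S →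
      (∏ p ∈ S, p ^ (M : ℕ).factorization p) = (M : ℕ) := by
    intro M hsub
    rw [← Finset.prod_subset hsub (fun p _ hp => by
      rw [Finsupp.notMem_support_iff.mp (by rwa [Nat.support_factorization]), pow_zero])]
    exact Nat.factorization_prod_pow_eq_self M.ne_zero
  set α : Fin k → ℕ := fun j => (m : ℕ).factorization (e j : ℕ) with hα
  set β : Fin k → ℕ := fun j => (n : ℕ).factorization (e j : ℕ) with hβ
  have hm : (∏ j : Fin k, nthPrime (ι j) ^ α j) = m := by
    apply PNat.coe_injective
    push_cast
    have := hprod (fun p => (m : ℕ).factorization p) m (fun p h => Finsupp.mem_support_iff.mpr h)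
      (fun p _ => rfl)
    rw [show (∏ j : Fin k, ((nthPrime (ι j) : ℕ+) : ℕ) ^ α j)
        = ∏ j : Fin k, ((nthPrime (ι j) : ℕ+) : ℕ) ^ (m : ℕ).factorization (e j : ℕ) from rfl,
      this]
    exact hfact m Finset.subset_union_left
  have hn : (∏ j : Fin k, nthPrime (ι j) ^ β j) = n := by
    apply PNat.coe_injective
    push_cast
    have := hprod (fun p => (n : ℕ).factorization p) n (fun p h => Finsupp.mem_support_iff.mpr h)
      (fun p _ => rfl)
    rw [show (∏ j : Fin k, ((nthPrime (ι j) : ℕ+) : ℕ) ^ β j)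
        = ∏ j : Fin k, ((nthPrime (ι j) : ℕ+) : ℕ) ^ (n : ℕ).factorization (e j : ℕ) from rfl,
      this]
    exact hfact n Finset.subset_union_right
  have habs : ∀ (u : ℕ → ℂ) (M : ℕ+), ((M : ℕ)).primeFactors ⊆ S →
      ‖Fχ u M‖ =
        ∏ j : Fin k, ‖u (ι j)‖ ^ (M : ℕ).factorization (e j : ℕ) := by
    intro u M hsub
    rw [abs_Fχ]
    have h3 : (∏ j : Fin k, ‖u (ι j)‖ ^ (M : ℕ).factorization (e j : ℕ))
        = ∏ p ∈ S, ‖u (pidx p)‖ ^ (M : ℕ).factorization p :=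
      (Equiv.prod_comp e
        (fun x : {x // x ∈ S} =>
          ‖u (pidx (x : ℕ))‖ ^ (M : ℕ).factorization (x : ℕ))).trans
        (Finset.prod_coe_sort S (fun p => ‖u (pidx p)‖ ^ (M : ℕ).factorization p))
    rw [h3]
    exact Finset.prod_subset hsub (fun p _ hp => by
      rw [Finsupp.notMem_support_iff.mp (by rwa [Nat.support_factorization]), pow_zero])
  have h1 := habs s m Finset.subset_union_left
  have h2 := habs t n Finset.subset_union_right
  calc ‖Fχ s m‖ * ‖Fχ t n‖
      = (∏ j : Fin k, ‖s (ι j)‖ ^ α j) *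
          (∏ j : Fin k, ‖t (ι j)‖ ^ β j) := by rw [h1, h2]
    _ ≤ ω (∏ j : Fin k, nthPrime (ι j) ^ α j, ∏ j : Fin k, nthPrime (ι j) ^ β j) :=
        hst k ι hinj α β
    _ = ω (m, n) := by rw [hm, hn]

/-- (a) the values of an `ω`-bounded semicharacter at the points `(pᵢ,1)` and
`(1,pᵢ)` satisfy the natural system of inequalities; (b) conversely, any pair of complex
sequences satisfying these inequalities comes from an `ω`-bounded semicharacter. -/
theorem stmt6 (ω : ℕ+ × ℕ+ → ℝ) (hω : IsWeight ω) :
    (∀ χ : ℕ+ × ℕ+ → ℂ, IsSemicharacter χ → OmegaBounded ω χ →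
      ∀ (k : ℕ) (ι : Fin k → ℕ), Function.Injective ι → ∀ α β : Fin k → ℕ,
        (∏ j : Fin k, ‖χ (nthPrime (ι j), 1)‖ ^ α j) *
            (∏ j : Fin k, ‖χ (1, nthPrime (ι j))‖ ^ β j) ≤
          ω (∏ j : Fin k, nthPrime (ι j) ^ α j, ∏ j : Fin k, nthPrime (ι j) ^ β j)) ∧
    (∀ s t : ℕ → ℂ,
      (∀ (k : ℕ) (ι : Fin k → ℕ), Function.Injective ι → ∀ α β : Fin k → ℕ,
        (∏ j : Fin k, ‖s (ι j)‖ ^ α j) *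
            (∏ j : Fin k, ‖t (ι j)‖ ^ β j) ≤
          ω (∏ j : Fin k, nthPrime (ι j) ^ α j, ∏ j : Fin k, nthPrime (ι j) ^ β j)) →
      ∃ χ : ℕ+ × ℕ+ → ℂ, IsSemicharacter χ ∧ OmegaBounded ω χ ∧
        ∀ i : ℕ, χ (nthPrime i, 1) = s i ∧ χ (1, nthPrime i) = t i) := by
  constructor
  · -- part (a)
    rintro χ ⟨hne, hmul⟩ hbdd k ι hinj α β
    have hone : χ (1, 1) = 1 := by
      obtain ⟨x, hx⟩ := Function.ne_iff.mp hne
      have := hmul x.1 x.2 1 1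
      simp only [mul_one] at this
      have hx' : χ x ≠ 0 := by simpa using hx
      have : χ x = χ x * χ (1, 1) := by
        convert this using 2
      field_simp at this
      tauto
    let χ' : ℕ+ × ℕ+ →* ℂ :=
      { toFun := χ, map_one' := hone,
        map_mul' := fun x y => hmul x.1 x.2 y.1 y.2 }
    have hpair : ∀ (f : Fin k → ℕ+ × ℕ+),
        (∏ j : Fin k, f j) = (∏ j : Fin k, (f j).1, ∏ j : Fin k, (f j).2) := by
      intro f
      exact Prod.ext (Prod.fst_prod) (Prod.snd_prod)
    have key : (∏ j : Fin k, ‖χ (nthPrime (ι j), 1)‖ ^ α j) *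
        (∏ j : Fin k, ‖χ (1, nthPrime (ι j))‖ ^ β j)
        = ‖χ' ((∏ j : Fin k, nthPrime (ι j) ^ α j,
            ∏ j : Fin k, nthPrime (ι j) ^ β j))‖ := by
      have e1 : (∏ j : Fin k, ‖χ (nthPrime (ι j), 1)‖ ^ α j)
          = ‖χ' (∏ j : Fin k, ((nthPrime (ι j), 1) : ℕ+ × ℕ+) ^ α j)‖ := by
        rw [map_prod, norm_prod]
        exact Finset.prod_congr rfl fun j _ => by rw [map_pow, norm_pow]; rfl
      have e2 : (∏ j : Fin k, ‖χ (1, nthPrime (ι j))‖ ^ β j)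
          = ‖χ' (∏ j : Fin k, ((1, nthPrime (ι j)) : ℕ+ × ℕ+) ^ β j)‖ := by
        rw [map_prod, norm_prod]
        exact Finset.prod_congr rfl fun j _ => by rw [map_pow, norm_pow]; rfl
      rw [e1, e2, ← norm_mul, ← map_mul]
      congr 1
      rw [hpair, hpair, Prod.mk_mul_mk]
      simp only [Prod.pow_fst, Prod.pow_snd, one_pow, Finset.prod_const_one, mul_one, one_mul]
    rw [key]
    exact hbdd _
  · -- part (b)
    intro s t hst
    refine ⟨fun mn => Fχ s mn.1 * Fχ t mn.2, ⟨?_, ?_⟩, ?_, ?_⟩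
    · intro h
      have := congrFun h (1, 1)
      simp [Fχ_one] at this
    · intro m₁ n₁ m₂ n₂
      simp only [Fχ_mul]
      ring
    · rintro ⟨m, n⟩
      rw [norm_mul]
      exact key_bound ω s t hst m n
    · intro i
      constructor
      · simp [Fχ_prime, Fχ_one]
      · simp [Fχ_prime, Fχ_one]

end
end

section
/- Let ω be a weight on ℕ², and let (rᵢ) and (sᵢ) be sequences of positive real numbers such that r_{i₁}^{α₁}⋯r_{i_k}^{α_k} s_{i₁}^{β₁}⋯s_{i_k}^{β_k} ≤ ω(p_{i₁}^{α₁}⋯p_{i_k}^{α_k}, p_{i₁}^{β₁}⋯p_{i_k}^{β_k}) whenever p_{i₁},...,p_{i_k} are distinct primes, α₁,...,α_k, β₁,...,β_k ∈ ℕ₀ and k ∈ ℕ. Then: (a) every pair of complex sequences ((zᵢ),(wᵢ)) with |zᵢ| ≤ rᵢ and |wᵢ| ≤ sᵢ for all i arises as (χ(pᵢ,1))ᵢ, (χ(1,pᵢ))ᵢ for some ω-bounded semicharacter χ on ℕ²; and (b) every ω-bounded semicharacter χ on ℕ² satisfies |χ(pᵢ,1)| ≤ ρᵢ and |χ(1,pᵢ)|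 ≤ μᵢ for all i ∈ ℕ. -/
open Complex Filter Topology

noncomputable section

lemma count_prime_inj {p q : ℕ} (hp : p.Prime) (hq : q.Prime)
    (h : Nat.count Nat.Prime p = Nat.count Nat.Prime q) : p = q := by
  rw [← Nat.nth_count hp, ← Nat.nth_count hq, h]

def chi (z w : ℕ → ℂ) (mn : ℕ+ × ℕ+) : ℂ :=
  ((mn.1 : ℕ).factorization.prod fun p a => z (Nat.count Nat.Prime p) ^ a) *
  ((mn.2 : ℕ).factorization.prod fun p a => w (Nat.count Nat.Prime p) ^ a)

lemma chi_mul (z w : ℕ → ℂ) (m₁ n₁ m₂ n₂ : ℕ+) :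
    chi z w (m₁ * m₂, n₁ * n₂) = chi z w (m₁, n₁) * chi z w (m₂, n₂) := by
  unfold chi
  simp only [PNat.mul_coe]
  rw [Nat.factorization_mul m₁.ne_zero m₂.ne_zero,
    Nat.factorization_mul n₁.ne_zero n₂.ne_zero,
    Finsupp.prod_add_index' (fun p => pow_zero _) (fun p a b => pow_add _ _ _),
    Finsupp.prod_add_index' (fun p => pow_zero _) (fun p a b => pow_add _ _ _)]
  ring

lemma chi_prime_left (z w : ℕ → ℂ) (i : ℕ) : chi z w (nthPrime i, 1) = z i := by
  have hp : ((nthPrime i : ℕ+) : ℕ).Prime := Nat.prime_nth_prime i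
  unfold chi
  rw [show ((1 : ℕ+) : ℕ) = 1 from rfl, Nat.factorization_one, Finsupp.prod_zero_index,
    hp.factorization]
  rw [Finsupp.prod_single_index (h := fun p a => z (Nat.count Nat.Prime p) ^ a) (pow_zero _), pow_one, mul_one]
  congr 1
  exact Nat.count_nth_of_infinite Nat.infinite_setOf_prime i

lemma chi_prime_right (z w : ℕ → ℂ) (i : ℕ) : chi z w (1, nthPrime i) = w i := by
  have hp : ((nthPrime i : ℕ+) : ℕ).Prime := Nat.prime_nth_prime i
  unfold chi
  rw [show ((1 : ℕ+) : ℕ) = 1 from rfl, Nat.factorization_one, Finsupp.prod_zero_index,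
    hp.factorization]
  rw [Finsupp.prod_single_index (h := fun p a => w (Nat.count Nat.Prime p) ^ a) (pow_zero _), pow_one, one_mul]
  congr 1
  exact Nat.count_nth_of_infinite Nat.infinite_setOf_prime i

lemma chi_bound (ω : ℕ+ × ℕ+ → ℝ) (r s : ℕ → ℝ) (hr : ∀ i, 0 < r i) (hs : ∀ i, 0 < s i)
    (hrs : ∀ (k : ℕ) (ι : Fin k → ℕ), Function.Injective ι → ∀ α β : Fin k → ℕ,
      (∏ j : Fin k, r (ι j) ^ α j) * (∏ j : Fin k, s (ι j) ^ β j) ≤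
        ω (∏ j : Fin k, nthPrime (ι j) ^ α j, ∏ j : Fin k, nthPrime (ι j) ^ β j))
    (z w : ℕ → ℂ) (hz : ∀ i, ‖z i‖ ≤ r i) (hw : ∀ i, ‖w i‖ ≤ s i)
    (m n : ℕ+) : ‖chi z w (m, n)‖ ≤ ω (m, n) := by
  classical
  set S : Finset ℕ := (m : ℕ).factorization.support ∪ (n : ℕ).factorization.support with hS
  have hSprime : ∀ p ∈ S, Nat.Prime p := by
    intro p hp
    rcases Finset.mem_union.mp hp with h | h
    · exact Nat.prime_of_mem_primeFactors (by rwa [Nat.support_factorization] at h)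
    · exact Nat.prime_of_mem_primeFactors (by rwa [Nat.support_factorization] at h)
  set k := S.card with hk
  set e := S.orderIsoOfFin rfl with he
  set ι : Fin k → ℕ := fun j => Nat.count Nat.Prime ((e j : ℕ)) with hι'
  set α : Fin k → ℕ := fun j => (m : ℕ).factorization (e j) with hα
  set β : Fin k → ℕ := fun j => (n : ℕ).factorization (e j) with hβ
  have hι : Function.Injective ι := by
    intro a b hab
    exact e.injective (Subtype.ext
      (count_prime_inj (hSprime _ (e a).2) (hSprime _ (e b).2) hab))
  have hnth : ∀ j, ((nthPrime (ι j) : ℕ+) : ℕ) = ((e j : ℕ)) := fun j =>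
    Nat.nth_count (hSprime _ (e j).2)
  -- products over Fin k reconstruct m and n
  have keyN : ∀ t : ℕ+, (t : ℕ).factorization.support ⊆ S →
      ∏ j : Fin k, ((e j : ℕ)) ^ (t : ℕ).factorization (e j) = (t : ℕ) := by
    intro t ht
    calc ∏ j : Fin k, ((e j : ℕ)) ^ (t : ℕ).factorization (e j)
        = ∏ x : S, (x : ℕ) ^ (t : ℕ).factorization x :=
          Equiv.prod_comp e.toEquiv (fun x : S => (x : ℕ) ^ (t : ℕ).factorization x)
      _ = ∏ p ∈ S, p ^ (t : ℕ).factorization p :=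
          Finset.prod_coe_sort S (fun p => p ^ (t : ℕ).factorization p)
      _ = ∏ p ∈ (t : ℕ).factorization.support, p ^ (t : ℕ).factorization p :=
          (Finset.prod_subset ht (fun p _ hp => by
            rw [Finsupp.notMem_support_iff.mp hp, pow_zero])).symm
      _ = (t : ℕ) := Nat.factorization_prod_pow_eq_self t.ne_zero
  have hm : (∏ j : Fin k, nthPrime (ι j) ^ α j) = m := by
    apply PNat.coe_injective
    rw [show ((∏ j : Fin k, nthPrime (ι j) ^ α j : ℕ+) : ℕ)
        = ∏ j : Fin k, ((nthPrime (ι j) ^ α j : ℕ+) : ℕ) from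
      map_prod PNat.coeMonoidHom _ _]
    simp only [PNat.pow_coe, hnth]
    exact keyN m Finset.subset_union_left
  have hn : (∏ j : Fin k, nthPrime (ι j) ^ β j) = n := by
    apply PNat.coe_injective
    rw [show ((∏ j : Fin k, nthPrime (ι j) ^ β j : ℕ+) : ℕ)
        = ∏ j : Fin k, ((nthPrime (ι j) ^ β j : ℕ+) : ℕ) from
      map_prod PNat.coeMonoidHom _ _]
    simp only [PNat.pow_coe, hnth]
    exact keyN n Finset.subset_union_right
  -- bound abs chi by products of r, s
  have keyR : ∀ (c : ℕ → ℂ) (t : ℕ+), (t : ℕ).factorization.support ⊆ S →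
      (t : ℕ).factorization.prod (fun p a => ‖c (Nat.count Nat.Prime p)‖ ^ a)
        = ∏ j : Fin k, ‖c (ι j)‖ ^ (t : ℕ).factorization (e j) := by
    intro c t ht
    calc (t : ℕ).factorization.prod (fun p a => ‖c (Nat.count Nat.Prime p)‖ ^ a)
        = ∏ p ∈ (t : ℕ).factorization.support,
            ‖c (Nat.count Nat.Prime p)‖ ^ (t : ℕ).factorization p := rfl
      _ = ∏ p ∈ S, ‖c (Nat.count Nat.Prime p)‖ ^ (t : ℕ).factorization p :=
          Finset.prod_subset ht (fun p _ hp => by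
            rw [Finsupp.notMem_support_iff.mp hp, pow_zero])
      _ = ∏ x : S, ‖c (Nat.count Nat.Prime (x : ℕ))‖ ^ (t : ℕ).factorization x :=
          (Finset.prod_coe_sort S _).symm
      _ = ∏ j : Fin k, ‖c (ι j)‖ ^ (t : ℕ).factorization (e j) :=
          (Equiv.prod_comp e.toEquiv (fun x : S =>
            ‖c (Nat.count Nat.Prime (x : ℕ))‖ ^ (t : ℕ).factorization x)).symm
  have habs : ‖chi z w (m, n)‖
      = (∏ j : Fin k, ‖z (ι j)‖ ^ α j) *
        (∏ j : Fin k, ‖w (ι j)‖ ^ β j) := by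
    unfold chi
    rw [norm_mul]
    congr 1
    · rw [← keyR z m Finset.subset_union_left]
      unfold Finsupp.prod
      rw [norm_prod]
      exact Finset.prod_congr rfl (fun p _ => norm_pow _ _)
    · rw [← keyR w n Finset.subset_union_right]
      unfold Finsupp.prod
      rw [norm_prod]
      exact Finset.prod_congr rfl (fun p _ => norm_pow _ _)
  rw [habs, ← hm, ← hn]
  refine le_trans (mul_le_mul ?_ ?_ ?_ ?_) (hrs k ι hι α β)
  · exact Finset.prod_le_prod (fun j _ => pow_nonneg (norm_nonneg _) _)
      (fun j _ => pow_le_pow_left₀ (norm_nonneg _) (hz _) _)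
  · exact Finset.prod_le_prod (fun j _ => pow_nonneg (norm_nonneg _) _)
      (fun j _ => pow_le_pow_left₀ (norm_nonneg _) (hw _) _)
  · exact Finset.prod_nonneg (fun j _ => pow_nonneg (norm_nonneg _) _)
  · exact Finset.prod_nonneg (fun j _ => pow_nonneg ((hr _).le) _)


theorem stmt7'aux (ω : ℕ+ × ℕ+ → ℝ)
    (r s : ℕ → ℝ) (hr : ∀ i, 0 < r i) (hs : ∀ i, 0 < s i)
    (hrs : ∀ (k : ℕ) (ι : Fin k → ℕ), Function.Injective ι → ∀ α β : Fin k → ℕ,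
      (∏ j : Fin k, r (ι j) ^ α j) * (∏ j : Fin k, s (ι j) ^ β j) ≤
        ω (∏ j : Fin k, nthPrime (ι j) ^ α j, ∏ j : Fin k, nthPrime (ι j) ^ β j)) :
    (∀ z w : ℕ → ℂ,
      (∀ i : ℕ, ‖z i‖ ≤ r i ∧ ‖w i‖ ≤ s i) →
      ∃ χ : ℕ+ × ℕ+ → ℂ, (χ ≠ 0 ∧ ∀ m₁ n₁ m₂ n₂ : ℕ+,
          χ (m₁ * m₂, n₁ * n₂) = χ (m₁, n₁) * χ (m₂, n₂)) ∧
        (∀ mn : ℕ+ × ℕ+, ‖χ mn‖ ≤ ω mn) ∧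
        ∀ i : ℕ, χ (nthPrime i, 1) = z i ∧ χ (1, nthPrime i) = w i) ∧
    (∀ χ : ℕ+ × ℕ+ → ℂ, (χ ≠ 0 ∧ ∀ m₁ n₁ m₂ n₂ : ℕ+,
          χ (m₁ * m₂, n₁ * n₂) = χ (m₁, n₁) * χ (m₂, n₂)) →
      (∀ mn : ℕ+ × ℕ+, ‖χ mn‖ ≤ ω mn) →
      ∀ i : ℕ, ‖χ (nthPrime i, 1)‖ ≤
          ⨅ n : ℕ+, ω (nthPrime i ^ (n : ℕ), 1) ^ ((1 : ℝ) / ((n : ℕ) : ℝ)) ∧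
        ‖χ (1, nthPrime i)‖ ≤
          ⨅ n : ℕ+, ω (1, nthPrime i ^ (n : ℕ)) ^ ((1 : ℝ) / ((n : ℕ) : ℝ))) := by
  constructor
  · intro z w hzw
    refine ⟨chi z w, ⟨?_, fun m₁ n₁ m₂ n₂ => chi_mul z w m₁ n₁ m₂ n₂⟩, ?_,
      fun i => ⟨chi_prime_left z w i, chi_prime_right z w i⟩⟩
    · intro h
      have h0 : chi z w (1, 1) = 0 := by rw [h]; rfl
      rw [show chi z w (1, 1) = 1 by
        unfold chi
        rw [show ((1 : ℕ+) : ℕ) = 1 from rfl, Nat.factorization_one,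
          Finsupp.prod_zero_index, Finsupp.prod_zero_index, mul_one]] at h0
      exact one_ne_zero h0
    · intro mn
      have := chi_bound ω r s hr hs hrs z w (fun i => (hzw i).1) (fun i => (hzw i).2)
        mn.1 mn.2
      simpa using this
  · intro χ hχ hb i
    obtain ⟨hne, hmul⟩ := hχ
    have h0 : χ (1, 1) ≠ 0 := by
      intro h0
      apply hne
      funext mn
      have h := hmul mn.1 mn.2 1 1
      simp only [mul_one, h0, mul_zero] at h
      simpa using h
    have h11 : χ (1, 1) = 1 := by
      have h := hmul 1 1 1 1
      simp only [mul_one] at h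
      exact (mul_left_cancel₀ h0 (by rw [mul_one, ← h])).symm
    have hpow1 : ∀ (p : ℕ+) (n : ℕ), χ (p ^ n, 1) = χ (p, 1) ^ n := by
      intro p n
      induction n with
      | zero => simpa using h11
      | succ n ih =>
        have h := hmul (p ^ n) 1 p 1
        rw [show (1 : ℕ+) * 1 = 1 from mul_one 1] at h
        rw [pow_succ, pow_succ, h, ih]
    have hpow2 : ∀ (p : ℕ+) (n : ℕ), χ (1, p ^ n) = χ (1, p) ^ n := by
      intro p n
      induction n with
      | zero => simpa using h11
      | succ n ih =>
        have h := hmul 1 (p ^ n) 1 p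
        rw [show (1 : ℕ+) * 1 = 1 from mul_one 1] at h
        rw [pow_succ, pow_succ, h, ih]
    constructor
    · apply le_ciInf
      intro n
      have hn0 : (0 : ℝ) < ((n : ℕ) : ℝ) := by exact_mod_cast n.pos
      have h1 : ‖χ (nthPrime i, 1)‖ ^ (n : ℕ) ≤ ω (nthPrime i ^ (n : ℕ), 1) := by
        rw [← norm_pow, ← hpow1]
        exact hb _
      calc ‖χ (nthPrime i, 1)‖
          = ((‖χ (nthPrime i, 1)‖) ^ (n : ℕ)) ^ ((1 : ℝ) / ((n : ℕ) : ℝ)) := by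
            rw [← Real.rpow_natCast _ (n : ℕ), ← Real.rpow_mul (norm_nonneg _),
              mul_one_div, div_self hn0.ne', Real.rpow_one]
        _ ≤ ω (nthPrime i ^ (n : ℕ), 1) ^ ((1 : ℝ) / ((n : ℕ) : ℝ)) :=
            Real.rpow_le_rpow (pow_nonneg (norm_nonneg _) _) h1 (by positivity)
    · apply le_ciInf
      intro n
      have hn0 : (0 : ℝ) < ((n : ℕ) : ℝ) := by exact_mod_cast n.pos
      have h1 : ‖χ (1, nthPrime i)‖ ^ (n : ℕ) ≤ ω (1, nthPrime i ^ (n : ℕ)) := by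
        rw [← norm_pow, ← hpow2]
        exact hb _
      calc ‖χ (1, nthPrime i)‖
          = ((‖χ (1, nthPrime i)‖) ^ (n : ℕ)) ^ ((1 : ℝ) / ((n : ℕ) : ℝ)) := by
            rw [← Real.rpow_natCast _ (n : ℕ), ← Real.rpow_mul (norm_nonneg _),
              mul_one_div, div_self hn0.ne', Real.rpow_one]
        _ ≤ ω (1, nthPrime i ^ (n : ℕ)) ^ ((1 : ℝ) / ((n : ℕ) : ℝ)) :=
            Real.rpow_le_rpow (pow_nonneg (norm_nonneg _) _) h1 (by positivity)


/-- (a) any pair of complex sequences dominated by sequences `(rᵢ)`, `(sᵢ)`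
compatible with the weight arises from an `ω`-bounded semicharacter; (b) every `ω`-bounded
semicharacter satisfies `|χ(pᵢ,1)| ≤ ρᵢ` and `|χ(1,pᵢ)| ≤ μᵢ`. -/
theorem stmt7 (ω : ℕ+ × ℕ+ → ℝ) (hω : IsWeight ω)
    (r s : ℕ → ℝ) (hr : ∀ i, 0 < r i) (hs : ∀ i, 0 < s i)
    (hrs : ∀ (k : ℕ) (ι : Fin k → ℕ), Function.Injective ι → ∀ α β : Fin k → ℕ,
      (∏ j : Fin k, r (ι j) ^ α j) * (∏ j : Fin k, s (ι j) ^ β j) ≤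
        ω (∏ j : Fin k, nthPrime (ι j) ^ α j, ∏ j : Fin k, nthPrime (ι j) ^ β j)) :
    (∀ z w : ℕ → ℂ,
      (∀ i : ℕ, ‖z i‖ ≤ r i ∧ ‖w i‖ ≤ s i) →
      ∃ χ : ℕ+ × ℕ+ → ℂ, IsSemicharacter χ ∧ OmegaBounded ω χ ∧
        ∀ i : ℕ, χ (nthPrime i, 1) = z i ∧ χ (1, nthPrime i) = w i) ∧
    (∀ χ : ℕ+ × ℕ+ → ℂ, IsSemicharacter χ → OmegaBounded ω χ →
      ∀ i : ℕ, ‖χ (nthPrime i, 1)‖ ≤ rho ω i ∧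
        ‖χ (1, nthPrime i)‖ ≤ mu ω i) := by
  obtain ⟨ha, hbnd⟩ := stmt7'aux ω r s hr hs hrs
  exact ⟨ha, hbnd⟩
end
end

section
/- Let ω be a weight on ℕ². Then ω is an admissible weight if and only if ρᵢ = 1 and μᵢ = 1 for all i ∈ ℕ. -/
open Complex Filter Topology

noncomputable section

private lemma const_rpow_tendsto {c : ℝ} (hc : 1 ≤ c) :
    Tendsto (fun n : ℕ => c ^ ((1 : ℝ) / n)) atTop (nhds 1) := by
  have h0 : (0:ℝ) < c := lt_of_lt_of_le one_pos hc
  have := (Real.continuousAt_const_rpow (a := c) (b := 0) (ne_of_gt h0)).tendsto.comp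
    tendsto_one_div_atTop_nhds_zero_nat
  simpa [Real.rpow_zero, Function.comp_def] using this

private lemma squeeze_rpow {u v : ℕ → ℝ} (h1 : ∀ n, 1 ≤ u n) (h2 : ∀ n, u n ≤ v n)
    (hv : Tendsto (fun n : ℕ => v n ^ ((1 : ℝ) / n)) atTop (nhds 1)) :
    Tendsto (fun n : ℕ => u n ^ ((1 : ℝ) / n)) atTop (nhds 1) := by
  refine tendsto_of_tendsto_of_tendsto_of_le_of_le tendsto_const_nhds hv
    (fun n => Real.one_le_rpow (h1 n) (by positivity)) (fun n => ?_)
  exact Real.rpow_le_rpow (le_trans zero_le_one (h1 n)) (h2 n) (by positivity)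

private lemma coord_tendsto (f : ℕ+ → ℝ) (h1 : ∀ m, 1 ≤ f m)
    (hsub : ∀ m n : ℕ+, f (m * n) ≤ f m * f n)
    (hp : ∀ p : ℕ+, (p : ℕ).Prime →
      Tendsto (fun n : ℕ => f (p ^ n) ^ ((1 : ℝ) / n)) atTop (nhds 1))
    (l : ℕ+) : Tendsto (fun n : ℕ => f (l ^ n) ^ ((1 : ℝ) / n)) atTop (nhds 1) := by
  have key : ∀ m : ℕ, ∀ h : 0 < m,
      Tendsto (fun n : ℕ => f ((⟨m, h⟩ : ℕ+) ^ n) ^ ((1 : ℝ) / n)) atTop (nhds 1) := by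
    intro m
    induction m using Nat.recOnMul with
    | zero => intro h; exact absurd h (lt_irrefl 0)
    | one =>
      intro h
      have : (⟨1, h⟩ : ℕ+) = 1 := rfl
      simp only [this, one_pow]
      exact const_rpow_tendsto (h1 1)
    | prime p hpp =>
      intro h
      exact hp ⟨p, h⟩ hpp
    | mul a b ha hb =>
      intro h
      have ha' : 0 < a := Nat.pos_of_ne_zero (by rintro rfl; simp at h)
      have hb' : 0 < b := Nat.pos_of_ne_zero (by rintro rfl; simp at h)
      have heq : (⟨a * b, h⟩ : ℕ+) = ⟨a, ha'⟩ * ⟨b, hb'⟩ := rfl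
      rw [heq]
      refine squeeze_rpow (v := fun n => f ((⟨a, ha'⟩:ℕ+) ^ n) * f ((⟨b, hb'⟩:ℕ+) ^ n)) (fun n => h1 _) (fun n => ?_) ?_
      · rw [mul_pow]; exact hsub _ _
      · have hlim := (ha ha').mul (hb hb')
        rw [mul_one] at hlim
        refine hlim.congr fun n => ?_
        exact (Real.mul_rpow (le_trans zero_le_one (h1 _)) (le_trans zero_le_one (h1 _))).symm
  exact key l l.pos


private lemma nthPrime_count {p : ℕ+} (hp : (p : ℕ).Prime) :
    nthPrime (Nat.count Nat.Prime (p : ℕ)) = p := by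
  apply PNat.coe_injective
  exact Nat.nth_count hp

/-- a weight `ω` on `ℕ²` is admissible iff `ρᵢ = μᵢ = 1` for all `i`,
i.e. iff `ω(pᵢⁿ,1)^{1/n} → 1` and `ω(1,pᵢⁿ)^{1/n} → 1` for every prime `pᵢ`. -/
theorem stmt8 (ω : ℕ+ × ℕ+ → ℝ) (hω : IsWeight ω) :
    Admissible ω ↔ ∀ i : ℕ,
      Tendsto (fun n : ℕ => ω (nthPrime i ^ n, 1) ^ ((1 : ℝ) / n)) atTop (nhds 1) ∧
      Tendsto (fun n : ℕ => ω (1, nthPrime i ^ n) ^ ((1 : ℝ) / n)) atTop (nhds 1) := by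
  constructor
  · intro hA i
    constructor
    · simpa using hA (nthPrime i) 1
    · simpa using hA 1 (nthPrime i)
  · intro h l k
    have h1 : ∀ l : ℕ+, Tendsto (fun n : ℕ => ω (l ^ n, 1) ^ ((1 : ℝ) / n)) atTop (nhds 1) := by
      refine coord_tendsto (fun m => ω (m, 1)) (fun m => hω.1 _)
        (fun m n => by simpa using hω.2 m 1 n 1) (fun p hpp => ?_)
      have := (h (Nat.count Nat.Prime (p : ℕ))).1
      rwa [nthPrime_count hpp] at this
    have h2 : ∀ k : ℕ+, Tendsto (fun n : ℕ => ω (1, k ^ n) ^ ((1 : ℝ) / n)) atTop (nhds 1) := by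
      refine coord_tendsto (fun m => ω (1, m)) (fun m => hω.1 _)
        (fun m n => by simpa using hω.2 1 m 1 n) (fun p hpp => ?_)
      have := (h (Nat.count Nat.Prime (p : ℕ))).2
      rwa [nthPrime_count hpp] at this
    refine squeeze_rpow (v := fun n => ω (l ^ n, 1) * ω (1, k ^ n)) (fun n => hω.1 _)
      (fun n => by simpa using hω.2 (l ^ n) 1 1 (k ^ n)) ?_
    have hlim := (h1 l).mul (h2 k)
    rw [mul_one] at hlim
    refine hlim.congr fun n => ?_
    rw [← Real.mul_rpow (le_trans zero_le_one (hω.1 _)) (le_trans zero_le_one (hω.1 _))]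
end
end

section
/- Let ω be a weight on ℕ². Then ω is an admissible weight if and only if every ω-bounded semicharacter χ on ℕ² satisfies |χ(m,n)| ≤ 1 for all (m,n) ∈ ℕ² (equivalently, the set of ω-bounded semicharacters coincides with the set of bounded semicharacters on ℕ²). -/
open Complex Filter Topology

noncomputable section

/-!
An `ω`-bounded semicharacter satisfies `|χ x| ≤ ω(xⁿ)^{1/n}` for every `n`, hence is bounded by
the growth rate `lim ω(xⁿ)^{1/n}` (which exists by Fekete's lemma), and admissibility says that
all growth rates equal `1`. Conversely, for a prime `p` the map `(pᵃ, 1) ↦ rᵃ`, extended by zero,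
is a semicharacter because the divisors of `(pᵃ, 1)` are again of this form; taking for `r` the
growth rate at `(p, 1)` it is `ω`-bounded, so that growth rate is at most `1`. The same holds at
`(1, p)`, and growth rates are submultiplicative, so they are at most `1` on all of `ℕ²`.
-/

structure IsMonoidWeight {M : Type*} [Monoid M] (ω : M → ℝ) : Prop where
  one_le : ∀ x, 1 ≤ ω x
  map_mul_le : ∀ x y, ω (x * y) ≤ ω x * ω y

lemma IsWeight.isMonoidWeight {ω : ℕ+ × ℕ+ → ℝ} (hω : IsWeight ω) : IsMonoidWeight ω :=
  ⟨hω.1, fun x y => hω.2 x.1 x.2 y.1 y.2⟩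

/-- `log lim ω(xⁿ)^{1/n}`, written as Fekete's infimum `inf_{n ≥ 1} log ω(xⁿ) / n`. -/
def logGrowth {M : Type*} [Monoid M] (ω : M → ℝ) (x : M) : ℝ :=
  sInf ((fun n : ℕ => Real.log (ω (x ^ n)) / n) '' Set.Ici 1)

namespace IsMonoidWeight

variable {M : Type*} {ω : M → ℝ}

section Monoid

variable [Monoid M]

lemma pos (hω : IsMonoidWeight ω) (x : M) : 0 < ω x :=
  one_pos.trans_le (hω.one_le x)

lemma subadditive_log_pow (hω : IsMonoidWeight ω) (x : M) :
    Subadditive fun n => Real.log (ω (x ^ n)) := by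
  intro a b
  dsimp only
  rw [pow_add, ← Real.log_mul (hω.pos _).ne' (hω.pos _).ne']
  exact Real.log_le_log (hω.pos _) (hω.map_mul_le _ _)

lemma bddBelow_log_pow_div (hω : IsMonoidWeight ω) (x : M) :
    BddBelow (Set.range fun n : ℕ => Real.log (ω (x ^ n)) / n) :=
  ⟨0, by rintro _ ⟨n, rfl⟩; exact div_nonneg (Real.log_nonneg (hω.one_le _)) n.cast_nonneg⟩

lemma logGrowth_eq_lim (hω : IsMonoidWeight ω) (x : M) :
    logGrowth ω x = (hω.subadditive_log_pow x).lim := by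
  rw [Subadditive.lim]; rfl

lemma tendsto_log_pow_div (hω : IsMonoidWeight ω) (x : M) :
    Tendsto (fun n : ℕ => Real.log (ω (x ^ n)) / n) atTop (𝓝 (logGrowth ω x)) := by
  rw [hω.logGrowth_eq_lim]
  exact (hω.subadditive_log_pow x).tendsto_lim (hω.bddBelow_log_pow_div x)

lemma tendsto_rpow_exp_logGrowth (hω : IsMonoidWeight ω) (x : M) :
    Tendsto (fun n : ℕ => ω (x ^ n) ^ ((1 : ℝ) / n)) atTop (𝓝 (Real.exp (logGrowth ω x))) := by
  refine ((Real.continuous_exp.tendsto _).comp (hω.tendsto_log_pow_div x)).congr fun n => ?_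
  rw [Function.comp_apply, Real.rpow_def_of_pos (hω.pos _), mul_one_div]

lemma logGrowth_nonneg (hω : IsMonoidWeight ω) (x : M) : 0 ≤ logGrowth ω x :=
  ge_of_tendsto' (hω.tendsto_log_pow_div x) fun n =>
    div_nonneg (Real.log_nonneg (hω.one_le _)) n.cast_nonneg

lemma logGrowth_one (hω : IsMonoidWeight ω) : logGrowth ω 1 = 0 := by
  refine tendsto_nhds_unique (hω.tendsto_log_pow_div 1) ?_
  simpa only [one_pow] using tendsto_const_div_atTop_nhds_zero_nat (Real.log (ω 1))

lemma exp_logGrowth_pow_le (hω : IsMonoidWeight ω) (x : M) (n : ℕ) :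
    Real.exp (logGrowth ω x) ^ n ≤ ω (x ^ n) := by
  rcases eq_or_ne n 0 with rfl | hn
  · simpa using hω.one_le 1
  have hle : n * logGrowth ω x ≤ Real.log (ω (x ^ n)) := by
    have := (hω.subadditive_log_pow x).lim_le_div (hω.bddBelow_log_pow_div x) hn
    rw [← hω.logGrowth_eq_lim, le_div_iff₀ (by positivity)] at this
    linarith
  calc Real.exp (logGrowth ω x) ^ n = Real.exp (n * logGrowth ω x) := (Real.exp_nat_mul _ n).symm
    _ ≤ Real.exp (Real.log (ω (x ^ n))) := Real.exp_le_exp.mpr hle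
    _ = ω (x ^ n) := Real.exp_log (hω.pos _)

lemma norm_le_exp_logGrowth (hω : IsMonoidWeight ω) (χ : M →* ℂ) (hχ : ∀ y, ‖χ y‖ ≤ ω y)
    (x : M) : ‖χ x‖ ≤ Real.exp (logGrowth ω x) := by
  refine ge_of_tendsto (hω.tendsto_rpow_exp_logGrowth x) ?_
  filter_upwards [eventually_ne_atTop 0] with n hn
  calc ‖χ x‖ = (‖χ x‖ ^ n) ^ ((1 : ℝ) / n) := by
        rw [one_div, Real.pow_rpow_inv_natCast (norm_nonneg _) hn]
    _ ≤ ω (x ^ n) ^ ((1 : ℝ) / n) := by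
        gcongr
        rw [← norm_pow, ← map_pow]
        exact hχ _

end Monoid

variable [CommMonoid M]

lemma logGrowth_mul_le (hω : IsMonoidWeight ω) (x y : M) :
    logGrowth ω (x * y) ≤ logGrowth ω x + logGrowth ω y := by
  refine le_of_tendsto_of_tendsto' (hω.tendsto_log_pow_div _)
    ((hω.tendsto_log_pow_div x).add (hω.tendsto_log_pow_div y)) fun n => ?_
  rw [← add_div, ← Real.log_mul (hω.pos _).ne' (hω.pos _).ne', mul_pow]
  exact div_le_div_of_nonneg_right (Real.log_le_log (hω.pos _) (hω.map_mul_le _ _))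
    n.cast_nonneg

lemma logGrowth_nonpos_of_mem_closure (hω : IsMonoidWeight ω) {S : Set M}
    (hS : ∀ s ∈ S, logGrowth ω s ≤ 0) {x : M} (hx : x ∈ Submonoid.closure S) :
    logGrowth ω x ≤ 0 := by
  induction hx using Submonoid.closure_induction with
  | mem s hs => exact hS s hs
  | one => exact hω.logGrowth_one.le
  | mul x y _ _ hx hy => linarith [hω.logGrowth_mul_le x y]

end IsMonoidWeight

def DvdClosedPowers {M : Type*} [Monoid M] (x : M) : Prop :=
  ∀ (y : M) (a : ℕ), y ∣ x ^ a → ∃ b : ℕ, y = x ^ b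

section PowerCharacter

variable {M : Type*} [CommMonoid M] {x : M}

def powerCharacter (hinj : Function.Injective (x ^ · : ℕ → M)) (hdvd : DvdClosedPowers x)
    (c : ℂ) : M →* ℂ where
  toFun := Function.extend (x ^ ·) (c ^ ·) 0
  map_one' := by simpa using hinj.extend_apply (c ^ ·) 0 0
  map_mul' y z := by
    have extend_pow : ∀ a, Function.extend (x ^ ·) (c ^ ·) 0 (x ^ a) = c ^ a :=
      hinj.extend_apply _ _
    have not_pow_mul : ∀ y z, (¬∃ a, x ^ a = y) → ¬∃ a, x ^ a = y * z := by
      rintro y z hy ⟨a, ha⟩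
      obtain ⟨b, rfl⟩ := hdvd y a (ha ▸ dvd_mul_right y z)
      exact hy ⟨b, rfl⟩
    by_cases hy : ∃ a, x ^ a = y
    · by_cases hz : ∃ a, x ^ a = z
      · obtain ⟨a, rfl⟩ := hy
        obtain ⟨b, rfl⟩ := hz
        rw [← pow_add, extend_pow, extend_pow, extend_pow, pow_add]
      · rw [mul_comm y z, Function.extend_apply' _ _ _ hz,
          Function.extend_apply' _ _ _ (not_pow_mul z y hz)]
        simp
    · rw [Function.extend_apply' _ _ _ hy, Function.extend_apply' _ _ _ (not_pow_mul y z hy)]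
      simp

lemma powerCharacter_pow (hinj : Function.Injective (x ^ · : ℕ → M)) (hdvd : DvdClosedPowers x)
    (c : ℂ) (a : ℕ) : powerCharacter hinj hdvd c (x ^ a) = c ^ a :=
  hinj.extend_apply (c ^ ·) 0 a

lemma powerCharacter_of_notMem (hinj : Function.Injective (x ^ · : ℕ → M))
    (hdvd : DvdClosedPowers x) (c : ℂ) {y : M} (hy : ¬∃ a, x ^ a = y) :
    powerCharacter hinj hdvd c y = 0 :=
  Function.extend_apply' _ _ _ hy

end PowerCharacter

namespace IsMonoidWeight

variable {M : Type*} [CommMonoid M] {ω : M → ℝ}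

lemma logGrowth_nonpos_of_forall_norm_le_one (hω : IsMonoidWeight ω) {x : M}
    (hinj : Function.Injective (x ^ · : ℕ → M)) (hdvd : DvdClosedPowers x)
    (hb : ∀ χ : M →* ℂ, (∀ y, ‖χ y‖ ≤ ω y) → ‖χ x‖ ≤ 1) : logGrowth ω x ≤ 0 := by
  set r := Real.exp (logGrowth ω x)
  have hbounded : ∀ y, ‖powerCharacter hinj hdvd (r : ℂ) y‖ ≤ ω y := by
    intro y
    by_cases hy : ∃ a, x ^ a = y
    · obtain ⟨a, rfl⟩ := hy
      rw [powerCharacter_pow, norm_pow, Complex.norm_real, Real.norm_of_nonneg (Real.exp_pos _).le]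
      exact hω.exp_logGrowth_pow_le x a
    · rw [powerCharacter_of_notMem _ _ _ hy, norm_zero]
      exact (hω.pos y).le
  have hx := powerCharacter_pow hinj hdvd (r : ℂ) 1
  rw [pow_one, pow_one] at hx
  have := hb _ hbounded
  rwa [hx, Complex.norm_real,
    Real.norm_of_nonneg (Real.exp_pos _).le, Real.exp_le_one_iff] at this

theorem forall_logGrowth_nonpos_iff (hω : IsMonoidWeight ω) {S : Set M}
    (hS : Submonoid.closure S = ⊤) (hinj : ∀ s ∈ S, Function.Injective (s ^ · : ℕ → M))
    (hdvd : ∀ s ∈ S, DvdClosedPowers s) :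
    (∀ x, logGrowth ω x ≤ 0) ↔ ∀ χ : M →* ℂ, (∀ y, ‖χ y‖ ≤ ω y) → ∀ y, ‖χ y‖ ≤ 1 := by
  refine ⟨fun h χ hχ y => ?_, fun h x => ?_⟩
  · calc ‖χ y‖ ≤ Real.exp (logGrowth ω y) := hω.norm_le_exp_logGrowth χ hχ y
      _ ≤ 1 := Real.exp_le_one_iff.mpr (h y)
  · refine hω.logGrowth_nonpos_of_mem_closure (fun s hs => ?_) (hS ▸ Submonoid.mem_top x)
    exact hω.logGrowth_nonpos_of_forall_norm_le_one (hinj s hs) (hdvd s hs) fun χ hχ => h χ hχ s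

end IsMonoidWeight

section Prod

variable {M N : Type*} [Monoid M] [Monoid N] {x : M}

lemma DvdClosedPowers.inl (hx : DvdClosedPowers x) (hN : ∀ y : N, y ∣ 1 → y = 1) :
    DvdClosedPowers (MonoidHom.inl M N x) := by
  rintro ⟨y₁, y₂⟩ a hy
  simp only [MonoidHom.inl_apply, Prod.pow_mk, one_pow, Prod.mk_dvd_mk] at hy
  obtain ⟨b, rfl⟩ := hx y₁ a hy.1
  exact ⟨b, by simp [hN y₂ hy.2]⟩

lemma DvdClosedPowers.inr {x : N} (hx : DvdClosedPowers x) (hM : ∀ y : M, y ∣ 1 → y = 1) :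
    DvdClosedPowers (MonoidHom.inr M N x) := by
  rintro ⟨y₁, y₂⟩ a hy
  simp only [MonoidHom.inr_apply, Prod.pow_mk, one_pow, Prod.mk_dvd_mk] at hy
  obtain ⟨b, rfl⟩ := hx y₂ a hy.2
  exact ⟨b, by simp [hM y₁ hy.1]⟩

lemma injective_pow_inl (hx : Function.Injective (x ^ · : ℕ → M)) :
    Function.Injective (MonoidHom.inl M N x ^ · : ℕ → M × N) :=
  fun a b h => hx (by simpa using congrArg Prod.fst h)

lemma injective_pow_inr {x : N} (hx : Function.Injective (x ^ · : ℕ → N)) :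
    Function.Injective (MonoidHom.inr M N x ^ · : ℕ → M × N) :=
  fun a b h => hx (by simpa using congrArg Prod.snd h)

end Prod

namespace PNat

lemma mem_closure_primes (n : ℕ+) : n ∈ Submonoid.closure {p : ℕ+ | p.Prime} := by
  rw [← n.prod_factorMultiset]
  exact Submonoid.multiset_prod_mem _ _ fun p hp =>
    Submonoid.subset_closure (PrimeMultiset.coePNat_prime _ p hp)

lemma injective_pow_of_prime {p : ℕ+} (hp : p.Prime) : Function.Injective (p ^ · : ℕ → ℕ+) :=
  fun a b h => Nat.pow_right_injective hp.two_le (by simpa using congrArg PNat.val h)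

lemma dvdClosedPowers_of_prime {p : ℕ+} (hp : p.Prime) : DvdClosedPowers p := by
  intro y a hy
  obtain ⟨b, -, hb⟩ := (Nat.dvd_prime_pow hp).1 (PNat.dvd_iff.1 hy)
  exact ⟨b, PNat.eq (by simpa using hb)⟩

end PNat

def primeGenerators : Set (ℕ+ × ℕ+) :=
  MonoidHom.inl ℕ+ ℕ+ '' {p | p.Prime} ∪ MonoidHom.inr ℕ+ ℕ+ '' {p | p.Prime}

lemma closure_primeGenerators : Submonoid.closure primeGenerators = ⊤ := by
  unfold primeGenerators
  refine eq_top_iff.2 fun ⟨l, k⟩ _ => ?_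
  have hl := Submonoid.mem_map_of_mem (MonoidHom.inl ℕ+ ℕ+) (PNat.mem_closure_primes l)
  have hk := Submonoid.mem_map_of_mem (MonoidHom.inr ℕ+ ℕ+) (PNat.mem_closure_primes k)
  rw [MonoidHom.map_mclosure] at hl hk
  simpa using Submonoid.mul_mem _
    (Submonoid.closure_mono Set.subset_union_left hl)
    (Submonoid.closure_mono Set.subset_union_right hk)

lemma injective_pow_of_mem_primeGenerators {x : ℕ+ × ℕ+} (hx : x ∈ primeGenerators) :
    Function.Injective (x ^ · : ℕ → ℕ+ × ℕ+) := by
  rcases hx with ⟨p, hp, rfl⟩ | ⟨p, hp, rfl⟩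
  · exact injective_pow_inl (PNat.injective_pow_of_prime hp)
  · exact injective_pow_inr (PNat.injective_pow_of_prime hp)

lemma dvdClosedPowers_of_mem_primeGenerators {x : ℕ+ × ℕ+} (hx : x ∈ primeGenerators) :
    DvdClosedPowers x := by
  rcases hx with ⟨p, hp, rfl⟩ | ⟨p, hp, rfl⟩
  · exact (PNat.dvdClosedPowers_of_prime hp).inl fun y => (PNat.dvd_one_iff y).1
  · exact (PNat.dvdClosedPowers_of_prime hp).inr fun y => (PNat.dvd_one_iff y).1

lemma IsSemicharacter.map_one {χ : ℕ+ × ℕ+ → ℂ} (hχ : IsSemicharacter χ) : χ 1 = 1 := by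
  obtain ⟨x, hx⟩ := Function.ne_iff.1 hχ.1
  have h := hχ.2 x.1 x.2 1 1
  rw [mul_one, mul_one] at h
  exact (mul_eq_left₀ hx).1 h.symm

def IsSemicharacter.toMonoidHom {χ : ℕ+ × ℕ+ → ℂ} (hχ : IsSemicharacter χ) : ℕ+ × ℕ+ →* ℂ where
  toFun := χ
  map_one' := hχ.map_one
  map_mul' x y := hχ.2 x.1 x.2 y.1 y.2

lemma MonoidHom.isSemicharacter (χ : ℕ+ × ℕ+ →* ℂ) : IsSemicharacter χ :=
  ⟨fun h => by simpa using congrFun h 1, fun m₁ n₁ m₂ n₂ => map_mul χ (m₁, n₁) (m₂, n₂)⟩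

lemma forall_isSemicharacter_iff {ω : ℕ+ × ℕ+ → ℝ} :
    (∀ χ : ℕ+ × ℕ+ → ℂ, IsSemicharacter χ → OmegaBounded ω χ → ∀ mn, ‖χ mn‖ ≤ 1) ↔
      ∀ χ : ℕ+ × ℕ+ →* ℂ, (∀ y, ‖χ y‖ ≤ ω y) → ∀ y, ‖χ y‖ ≤ 1 :=
  ⟨fun h χ => h χ χ.isSemicharacter, fun h _ hχ => h hχ.toMonoidHom⟩

lemma admissible_iff_forall_logGrowth_nonpos {ω : ℕ+ × ℕ+ → ℝ} (hω : IsWeight ω) :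
    Admissible ω ↔ ∀ x, logGrowth ω x ≤ 0 := by
  have hω' := hω.isMonoidWeight
  refine ⟨fun h x => ?_, fun h l k => ?_⟩
  · have := tendsto_nhds_unique (h x.1 x.2) (hω'.tendsto_rpow_exp_logGrowth x)
    rw [eq_comm, Real.exp_eq_one_iff] at this
    exact this.le
  · have := hω'.tendsto_rpow_exp_logGrowth (l, k)
    rwa [le_antisymm (h _) (hω'.logGrowth_nonneg _), Real.exp_zero] at this

/-- a weight `ω` on `ℕ²` is admissible iff every `ω`-bounded semicharacter is
bounded (by `1`) everywhere. -/
theorem stmt9 (ω : ℕ+ × ℕ+ → ℝ) (hω : IsWeight ω) :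
    Admissible ω ↔ ∀ χ : ℕ+ × ℕ+ → ℂ, IsSemicharacter χ → OmegaBounded ω χ →
      ∀ mn : ℕ+ × ℕ+, ‖χ mn‖ ≤ 1 := by
  rw [admissible_iff_forall_logGrowth_nonpos hω, forall_isSemicharacter_iff]
  exact hω.isMonoidWeight.forall_logGrowth_nonpos_iff closure_primeGenerators
    (fun _ => injective_pow_of_mem_primeGenerators)
    (fun _ => dvdClosedPowers_of_mem_primeGenerators)
end
end

section
/- Let ω be an almost monotone weight on ℕ² and let j ∈ ℕ. Then every semicharacter χ on ℕ² satisfying |χ(p_j,1)| ≤ ρ_j, |χ(pᵢ,1)| ≤ 1 for all i ≠ j, and |χ(1,pᵢ)| ≤ 1 for all i ∈ ℕ, is ω-bounded, i.e. |χ(m,n)| ≤ ω(m,n) for all (m,n) ∈ ℕ². -/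
open Complex Filter Topology

noncomputable section

/-- for an almost monotone weight `ω` and `j ∈ ℕ`, every semicharacter with
`|χ(p_j,1)| ≤ ρ_j`, `|χ(pᵢ,1)| ≤ 1` for `i ≠ j`, and `|χ(1,pᵢ)| ≤ 1` for all `i`, is
`ω`-bounded. -/
theorem stmt10 (ω : ℕ+ × ℕ+ → ℝ) (hω : IsWeight ω) (hmon : AlmostMonotone ω)
    (j : ℕ) (χ : ℕ+ × ℕ+ → ℂ) (hχ : IsSemicharacter χ)
    (hj : ‖χ (nthPrime j, 1)‖ ≤ rho ω j)
    (h1 : ∀ i : ℕ, i ≠ j → ‖χ (nthPrime i, 1)‖ ≤ 1)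
    (h2 : ∀ i : ℕ, ‖χ (1, nthPrime i)‖ ≤ 1) :
    OmegaBounded ω χ := by
  obtain ⟨hχ0, hχm⟩ := hχ
  have hω1 := hω.1
  have hωm := hω.2
  set P : ℕ+ := nthPrime j with hPdef
  set ρ : ℝ := rho ω j with hρdef
  -- χ(1,1) = 1
  have hone : χ (1, 1) = 1 := by
    have h11 : χ (1, 1) * χ (1, 1) = χ (1, 1) := by
      have := hχm 1 1 1 1
      simp only [mul_one] at this
      exact this.symm
    have hfac0 : χ (1, 1) * (χ (1, 1) - 1) = 0 := by ring_nf; linear_combination h11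
    rcases mul_eq_zero.mp hfac0 with h0 | h1'
    · exfalso
      apply hχ0
      funext mn
      have hmul := hχm mn.1 mn.2 1 1
      simp only [mul_one] at hmul
      show χ (mn.1, mn.2) = 0
      rw [hmul, h0, mul_zero]
    · exact sub_eq_zero.mp h1'
  have hone' : χ (1 : ℕ+ × ℕ+) = 1 := hone
  -- 1 ≤ ρ
  have hbdd : BddBelow (Set.range fun n : ℕ+ =>
      ω (nthPrime j ^ (n : ℕ), 1) ^ ((1 : ℝ) / ((n : ℕ) : ℝ))) := by
    refine ⟨0, ?_⟩
    rintro x ⟨n, rfl⟩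
    exact Real.rpow_nonneg (le_trans zero_le_one (hω1 _)) _
  have hρ1 : (1 : ℝ) ≤ ρ := by
    rw [hρdef, rho]
    exact le_ciInf fun n => Real.one_le_rpow (hω1 _) (by positivity)
  have hρ0 : (0 : ℝ) ≤ ρ := le_trans zero_le_one hρ1
  -- ρ^k ≤ ω(P^k, 1)
  have hρpow : ∀ k : ℕ, ρ ^ k ≤ ω (P ^ k, 1) := by
    intro k
    rcases Nat.eq_zero_or_pos k with rfl | hk
    · simpa using hω1 (1, 1)
    · have hterm : ρ ≤ ω (P ^ k, 1) ^ ((1 : ℝ) / (k : ℝ)) := by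
        have := ciInf_le hbdd (⟨k, hk⟩ : ℕ+)
        rw [hρdef, rho]
        simpa using this
      have hωpos : (0 : ℝ) < ω (P ^ k, 1) := lt_of_lt_of_le zero_lt_one (hω1 _)
      calc ρ ^ k ≤ (ω (P ^ k, 1) ^ ((1 : ℝ) / (k : ℝ))) ^ k :=
            pow_le_pow_left₀ hρ0 hterm k
        _ = ω (P ^ k, 1) := by
            rw [← Real.rpow_natCast (ω (P ^ k, 1) ^ ((1 : ℝ) / (k : ℝ))) k,
              ← Real.rpow_mul hωpos.le, one_div, inv_mul_cancel₀ (by exact_mod_cast hk.ne'),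
              Real.rpow_one]
  -- bound for χ(m,1)
  have hA : ∀ m : ℕ+, ‖χ (m, 1)‖ ≤ ρ ^ ((m : ℕ).factorization (P : ℕ)) := by
    intro m
    induction m using PNat.strongInductionOn with
    | _ m IH =>
      rcases eq_or_lt_of_le m.one_le with hm1 | hm1
      · rw [← hm1]
        simp [hone, hone']
      · have hm : 1 < (m : ℕ) := hm1
        set q := (m : ℕ).minFac with hqdef
        have hq : q.Prime := Nat.minFac_prime (by omega)
        obtain ⟨c, hc⟩ := (m : ℕ).minFac_dvd
        have hc0 : 0 < c := by
          rcases Nat.eq_zero_or_pos c with rfl | h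
          · omega
          · exact h
        set Q : ℕ+ := ⟨q, hq.pos⟩ with hQdef
        set M : ℕ+ := ⟨c, hc0⟩ with hMdef
        have hmQ : m = Q * M := by
          apply PNat.coe_injective
          rw [PNat.mul_coe]; exact hc
        have hMlt : M < m := by
          have hlt : c < (m : ℕ) := by
            have h2q : 2 ≤ q := hq.two_le
            calc c = 1 * c := (one_mul c).symm
              _ < q * c := by
                  apply Nat.mul_lt_mul_of_lt_of_le (by omega) le_rfl hc0
              _ = (m : ℕ) := hc.symm
          exact_mod_cast hlt
        have hsplit : χ (m, 1) = χ (Q, 1) * χ (M, 1) := by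
          have := hχm Q 1 M 1
          simp only [mul_one] at this
          rw [hmQ]; exact this
        have hfac : (m : ℕ).factorization (P : ℕ)
            = (if q = (P : ℕ) then 1 else 0) + c.factorization (P : ℕ) := by
          conv_lhs => rw [hc]
          rw [Nat.factorization_mul hq.ne_zero hc0.ne']
          simp [hq.factorization, Finsupp.single_apply]
        have hM := IH M hMlt
        have hMc : ((M : ℕ+) : ℕ) = c := rfl
        by_cases hqP : q = (P : ℕ)
        · have hQP : Q = P := PNat.coe_injective hqP
          have hb1 : ‖χ (Q, 1)‖ ≤ ρ := by rw [hQP]; exact hj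
          rw [hsplit, norm_mul, hfac, if_pos hqP, pow_add, pow_one]
          exact mul_le_mul hb1 (by simpa [hMc] using hM)
            (norm_nonneg _) hρ0
        · set i := Nat.count Nat.Prime q with hidef
          have hnth : nthPrime i = Q := by
            apply PNat.coe_injective
            show Nat.nth Nat.Prime i = q
            rw [hidef]; exact Nat.nth_count hq
          have hij : i ≠ j := by
            intro h
            apply hqP
            have hQP : (Q : ℕ) = (P : ℕ) := by rw [← hnth, h, hPdef]
            exact hQP
          have hb1 : ‖χ (Q, 1)‖ ≤ 1 := by rw [← hnth]; exact h1 i hij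
          rw [hsplit, norm_mul, hfac, if_neg hqP, zero_add]
          calc ‖χ (Q, 1)‖ * ‖χ (M, 1)‖
              ≤ 1 * (ρ ^ (c.factorization (P : ℕ))) :=
                mul_le_mul hb1 (by simpa [hMc] using hM) (norm_nonneg _) zero_le_one
            _ = ρ ^ (c.factorization (P : ℕ)) := one_mul _
  -- bound for χ(1,n)
  have hB : ∀ n : ℕ+, ‖χ (1, n)‖ ≤ 1 := by
    intro n
    induction n using PNat.strongInductionOn with
    | _ n IH =>
      rcases eq_or_lt_of_le n.one_le with hn1 | hn1
      · rw [← hn1]; simp [hone, hone']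
      · have hn : 1 < (n : ℕ) := hn1
        set q := (n : ℕ).minFac with hqdef
        have hq : q.Prime := Nat.minFac_prime (by omega)
        obtain ⟨c, hc⟩ := (n : ℕ).minFac_dvd
        have hc0 : 0 < c := by
          rcases Nat.eq_zero_or_pos c with rfl | h
          · omega
          · exact h
        set Q : ℕ+ := ⟨q, hq.pos⟩ with hQdef
        set M : ℕ+ := ⟨c, hc0⟩ with hMdef
        have hnQ : n = Q * M := by
          apply PNat.coe_injective
          rw [PNat.mul_coe]; exact hc
        have hMlt : M < n := by
          have hlt : c < (n : ℕ) := by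
            calc c = 1 * c := (one_mul c).symm
              _ < q * c := by
                  apply Nat.mul_lt_mul_of_lt_of_le (by have := hq.two_le; omega) le_rfl hc0
              _ = (n : ℕ) := hc.symm
          exact_mod_cast hlt
        have hsplit : χ (1, n) = χ (1, Q) * χ (1, M) := by
          have := hχm 1 Q 1 M
          simp only [mul_one] at this
          rw [hnQ]; exact this
        have hnth : nthPrime (Nat.count Nat.Prime q) = Q := by
          apply PNat.coe_injective
          show Nat.nth Nat.Prime (Nat.count Nat.Prime q) = q
          exact Nat.nth_count hq
        have hb1 : ‖χ (1, Q)‖ ≤ 1 := by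
          rw [← hnth]; exact h2 _
        rw [hsplit, norm_mul]
        calc ‖χ (1, Q)‖ * ‖χ (1, M)‖
            ≤ 1 * 1 := mul_le_mul hb1 (IH M hMlt) (norm_nonneg _) zero_le_one
          _ = 1 := one_mul 1
  -- combined bound
  have hmain : ∀ m n : ℕ+, ‖χ (m, n)‖ ≤ ρ ^ ((m : ℕ).factorization (P : ℕ)) := by
    intro m n
    have hsplit : χ (m, n) = χ (m, 1) * χ (1, n) := by
      have := hχm m 1 1 n
      simpa using this
    rw [hsplit, norm_mul]
    calc ‖χ (m, 1)‖ * ‖χ (1, n)‖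
        ≤ (ρ ^ ((m : ℕ).factorization (P : ℕ))) * 1 :=
          mul_le_mul (hA m) (hB n) (norm_nonneg _) (by positivity)
      _ = ρ ^ ((m : ℕ).factorization (P : ℕ)) := mul_one _
  -- |χ(m^N, n^N)| = |χ(m,n)|^N
  have hpowχ : ∀ (m n : ℕ+) (N : ℕ),
      ‖χ (m ^ N, n ^ N)‖ = ‖χ (m, n)‖ ^ N := by
    intro m n N
    induction N with
    | zero => simp [hone, hone']
    | succ N IH =>
        rw [pow_succ m N, pow_succ n N, hχm (m ^ N) (n ^ N) m n, norm_mul, IH, pow_succ]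
  -- ω(m^(N+1), n^(N+1)) ≤ ω(m,n)^(N+1)
  have hpowω : ∀ (m n : ℕ+) (N : ℕ), ω (m ^ (N + 1), n ^ (N + 1)) ≤ ω (m, n) ^ (N + 1) := by
    intro m n N
    induction N with
    | zero => simp
    | succ N IH =>
        calc ω (m ^ (N + 2), n ^ (N + 2)) = ω (m ^ (N + 1) * m, n ^ (N + 1) * n) := by
              rw [← pow_succ m (N + 1), ← pow_succ n (N + 1)]
          _ ≤ ω (m ^ (N + 1), n ^ (N + 1)) * ω (m, n) := hωm _ _ _ _
          _ ≤ ω (m, n) ^ (N + 1) * ω (m, n) :=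
              mul_le_mul_of_nonneg_right IH (le_trans zero_le_one (hω1 _))
          _ = ω (m, n) ^ (N + 2) := (pow_succ _ _).symm
  rintro ⟨m, n⟩
  rcases hmon with hadm | ⟨K, hK, hKmon⟩
  · -- admissible case: ρ = 1
    have hρle : ρ ≤ 1 := by
      have ht := hadm P 1
      refine ge_of_tendsto ht ?_
      filter_upwards [eventually_ge_atTop 1] with N hN
      have := ciInf_le hbdd (⟨N, hN⟩ : ℕ+)
      rw [hρdef, rho]
      simpa [one_pow, hPdef] using this
    have hρeq : ρ = 1 := le_antisymm hρle hρ1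
    calc ‖χ (m, n)‖ ≤ ρ ^ ((m : ℕ).factorization (P : ℕ)) := hmain m n
      _ = 1 := by rw [hρeq, one_pow]
      _ ≤ ω (m, n) := hω1 _
  · -- almost monotone with constant K
    by_contra hcon
    push_neg at hcon
    set v := (m : ℕ).factorization (P : ℕ) with hvdef
    have hw1 : (1 : ℝ) ≤ ω (m, n) := hω1 _
    have hwpos : (0 : ℝ) < ω (m, n) := lt_of_lt_of_le zero_lt_one hw1
    have hr : 1 < ‖χ (m, n)‖ / ω (m, n) := (one_lt_div hwpos).2 hcon
    obtain ⟨N₀, hN₀⟩ := pow_unbounded_of_one_lt K hr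
    set N := N₀ + 1 with hNdef
    have hKN : K < (‖χ (m, n)‖ / ω (m, n)) ^ N :=
      lt_of_lt_of_le hN₀ (pow_le_pow_right₀ hr.le (Nat.le_succ _))
    have hdvd : ((P ^ (N * v) : ℕ+) : ℕ) ∣ ((m ^ N : ℕ+) : ℕ) := by
      rw [PNat.pow_coe, PNat.pow_coe]
      have h1' : (P : ℕ) ^ v ∣ (m : ℕ) := Nat.ordProj_dvd _ _
      have := pow_dvd_pow_of_dvd h1' N
      rwa [← pow_mul, mul_comm v N] at this
    have hvN : (((m ^ N : ℕ+) : ℕ)).factorization (P : ℕ) = N * v := by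
      rw [PNat.pow_coe, Nat.factorization_pow]
      simp [hvdef]
    have chain : ‖χ (m, n)‖ ^ N ≤ K * ω (m, n) ^ N := by
      calc ‖χ (m, n)‖ ^ N = ‖χ (m ^ N, n ^ N)‖ := (hpowχ m n N).symm
        _ ≤ ρ ^ ((((m ^ N : ℕ+) : ℕ)).factorization (P : ℕ)) := hmain _ _
        _ = ρ ^ (N * v) := by rw [hvN]
        _ ≤ ω (P ^ (N * v), 1) := hρpow _
        _ ≤ K * ω (m ^ N, n ^ N) := hKmon _ _ _ _ (Or.inl hdvd)
        _ ≤ K * ω (m, n) ^ N :=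
            mul_le_mul_of_nonneg_left (hpowω m n N₀) hK.le
    have hlt : K * ω (m, n) ^ N < ‖χ (m, n)‖ ^ N := by
      have := mul_lt_mul_of_pos_right hKN (pow_pos hwpos N)
      rwa [div_pow, div_mul_cancel₀ _ (pow_ne_zero N hwpos.ne')] at this
    linarith
end
end
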